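/- arXiv:2605.19896 — 4 statements merged into one kernel-verified Lean document; each statement's English description precedes it below -/
import Mathlib

section
/- Let n ∈ ℕ, Δt > 0, ζ ∈ [1/2, 1], let M ∈ ℝ^{n×n} be symmetric positive definite and A ∈ ℝ^{n×n} symmetric positive semidefinite, and let e⁻, e, ė⁻, ė, r ∈ ℝⁿ satisfy the error scheme equations (1/Δt)·M(ė − ė⁻) + A((1−ζ)e⁻ + ζe) = r and (1/Δt)(e − e⁻) = (1−ζ)ė⁻ + ζė. Define the energy norms E⁻ := (ė⁻ᵀMė⁻ + e⁻ᵀAe⁻)^{1/2} and E := (ėᵀMė + eᵀAe)^{1/2}, and the dual residual norm ‖r‖_* := (rᵀM⁻¹r)^{1/2}. Then E² − (E⁻)² ≤ 2Δt·‖r‖_*·(E⁻ + E). -/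
/-!
Testing the first equation with `w = (1 - ζ) ė⁻ + ζ ė = (e - e⁻) / Δt` turns it into an energy
balance, because for symmetric positive semidefinite `B`
`2 (x - y)ᵀ B ((1 - ζ) y + ζ x) = xᵀBx - yᵀBy + (2ζ - 1) (x - y)ᵀ B (x - y)`,
so for `ζ ≥ 1/2` the energy increment is at most `2 Δt wᵀr`. Cauchy–Schwarz in the `M`-inner
product gives `wᵀr ≤ ‖r‖_* ‖w‖_M`, and convexity of `‖·‖_M` gives `‖w‖_M ≤ E⁻ + E`.
-/

open Matrix

namespace Matrix

variable {ι : Type*} [Fintype ι] {B : Matrix ι ι ℝ}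

theorem IsHermitian.dotProduct_mulVec_comm (hB : B.IsHermitian) (x y : ι → ℝ) :
    x ⬝ᵥ B *ᵥ y = y ⬝ᵥ B *ᵥ x := by
  rw [dotProduct_mulVec, ← mulVec_transpose, ← conjTranspose_eq_transpose_of_trivial, hB.eq,
    dotProduct_comm]

namespace PosSemidef

theorem dotProduct_mulVec_self_nonneg (hB : B.PosSemidef) (x : ι → ℝ) : 0 ≤ x ⬝ᵥ B *ᵥ x := by
  simpa using hB.dotProduct_mulVec_nonneg x

theorem dotProduct_mulVec_mul_self_le (hB : B.PosSemidef) (x y : ι → ℝ) :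
    (x ⬝ᵥ B *ᵥ y) * (x ⬝ᵥ B *ᵥ y) ≤ (x ⬝ᵥ B *ᵥ x) * (y ⬝ᵥ B *ᵥ y) := by
  let _ := B.toSeminormedAddCommGroup hB
  let _ := B.toInnerProductSpace hB
  have hinner (u v : ι → ℝ) : inner ℝ u v = u ⬝ᵥ B *ᵥ v := by
    change (B *ᵥ v) ⬝ᵥ star u = _
    simp [dotProduct_comm]
  simpa only [hinner] using real_inner_mul_inner_self_le x y

theorem dotProduct_mulVec_le_sqrt_mul_sqrt (hB : B.PosSemidef) (x y : ι → ℝ) :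
    x ⬝ᵥ B *ᵥ y ≤ √(x ⬝ᵥ B *ᵥ x) * √(y ⬝ᵥ B *ᵥ y) := by
  rw [← Real.sqrt_mul (hB.dotProduct_mulVec_self_nonneg x)]
  exact (le_abs_self _).trans <| Real.abs_le_sqrt <| by
    simpa only [sq] using hB.dotProduct_mulVec_mul_self_le x y

theorem sqrt_dotProduct_mulVec_smul_add_smul_le (hB : B.PosSemidef) {a b : ℝ} (ha : 0 ≤ a)
    (hb : 0 ≤ b) (x y : ι → ℝ) :
    √((a • x + b • y) ⬝ᵥ B *ᵥ (a • x + b • y)) ≤ a * √(x ⬝ᵥ B *ᵥ x) + b * √(y ⬝ᵥ B *ᵥ y) := by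
  have hx := Real.sq_sqrt (hB.dotProduct_mulVec_self_nonneg x)
  have hy := Real.sq_sqrt (hB.dotProduct_mulVec_self_nonneg y)
  have hxy := mul_le_mul_of_nonneg_left (hB.dotProduct_mulVec_le_sqrt_mul_sqrt x y)
    (by positivity : 0 ≤ 2 * a * b)
  have hexpand : (a • x + b • y) ⬝ᵥ B *ᵥ (a • x + b • y) =
      a ^ 2 * (x ⬝ᵥ B *ᵥ x) + 2 * a * b * (x ⬝ᵥ B *ᵥ y) + b ^ 2 * (y ⬝ᵥ B *ᵥ y) := by
    simp only [mulVec_add, mulVec_smul, dotProduct_add, add_dotProduct, dotProduct_smul,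
      smul_dotProduct, smul_eq_mul, hB.isHermitian.dotProduct_mulVec_comm y x]
    ring
  rw [Real.sqrt_le_iff, hexpand]
  exact ⟨by positivity, by nlinarith⟩

theorem dotProduct_mulVec_self_sub_le (hB : B.PosSemidef) {ζ : ℝ} (hζ : 1 / 2 ≤ ζ)
    (x y : ι → ℝ) :
    x ⬝ᵥ B *ᵥ x - y ⬝ᵥ B *ᵥ y ≤ 2 * ((x - y) ⬝ᵥ B *ᵥ ((1 - ζ) • y + ζ • x)) := by
  have hidentity : 2 * ((x - y) ⬝ᵥ B *ᵥ ((1 - ζ) • y + ζ • x)) =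
      x ⬝ᵥ B *ᵥ x - y ⬝ᵥ B *ᵥ y + (2 * ζ - 1) * ((x - y) ⬝ᵥ B *ᵥ (x - y)) := by
    simp only [mulVec_add, mulVec_sub, mulVec_smul, dotProduct_add, dotProduct_sub,
      sub_dotProduct, dotProduct_smul, smul_eq_mul, hB.isHermitian.dotProduct_mulVec_comm y x]
    ring
  rw [hidentity]
  linarith [mul_nonneg (by linarith : 0 ≤ 2 * ζ - 1) (hB.dotProduct_mulVec_self_nonneg (x - y))]

end PosSemidef

theorem PosDef.dotProduct_le_sqrt_inv_mul_sqrt [DecidableEq ι] (hB : B.PosDef) (x r : ι → ℝ) :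
    x ⬝ᵥ r ≤ √(r ⬝ᵥ B⁻¹ *ᵥ r) * √(x ⬝ᵥ B *ᵥ x) := by
  have hr : B *ᵥ (B⁻¹ *ᵥ r) = r := by
    rw [mulVec_mulVec, mul_nonsing_inv _ ((isUnit_iff_isUnit_det B).mp hB.isUnit), one_mulVec]
  have hdual : (B⁻¹ *ᵥ r) ⬝ᵥ B *ᵥ (B⁻¹ *ᵥ r) = r ⬝ᵥ B⁻¹ *ᵥ r := by
    rw [hr, dotProduct_comm]
  rw [← hdual]
  conv_lhs => rw [← hr, hB.isHermitian.dotProduct_mulVec_comm]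
  exact hB.posSemidef.dotProduct_mulVec_le_sqrt_mul_sqrt _ _

end Matrix

theorem errorScheme_energy_sub_le {ι : Type*} [Fintype ι] {Δt ζ : ℝ} (hΔt : Δt ≠ 0)
    (hζ : 1 / 2 ≤ ζ) {M A : Matrix ι ι ℝ} (hM : M.PosSemidef) (hA : A.PosSemidef)
    {em e dem de r : ι → ℝ}
    (h1 : (1 / Δt) • (M *ᵥ (de - dem)) + A *ᵥ ((1 - ζ) • em + ζ • e) = r)
    (h2 : (1 / Δt) • (e - em) = (1 - ζ) • dem + ζ • de) :
    (de ⬝ᵥ M *ᵥ de + e ⬝ᵥ A *ᵥ e) - (dem ⬝ᵥ M *ᵥ dem + em ⬝ᵥ A *ᵥ em) ≤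
      2 * Δt * (((1 - ζ) • dem + ζ • de) ⬝ᵥ r) := by
  set w := (1 - ζ) • dem + ζ • de
  have hstep : e - em = Δt • w := by
    rw [← h2, smul_smul, mul_one_div_cancel hΔt, one_smul]
  have hbalance : (de - dem) ⬝ᵥ M *ᵥ w + (e - em) ⬝ᵥ A *ᵥ ((1 - ζ) • em + ζ • e) =
      Δt * (w ⬝ᵥ r) := by
    rw [← h1, hstep, hM.isHermitian.dotProduct_mulVec_comm, dotProduct_add, dotProduct_smul,
      smul_dotProduct, smul_eq_mul, smul_eq_mul]
    field_simp
  linarith [hM.dotProduct_mulVec_self_sub_le hζ de dem, hA.dotProduct_mulVec_self_sub_le hζ e em]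

/-- One-step a posteriori bound for the error scheme of the ζ-scheme, for
`ζ ∈ [1/2, 1]`, `M` symmetric positive definite, `A` symmetric positive
semidefinite: with energy norms `E⁻ = (ė⁻ᵀMė⁻ + e⁻ᵀAe⁻)^{1/2}`,
`E = (ėᵀMė + eᵀAe)^{1/2}` and dual residual norm `‖r‖_* = (rᵀM⁻¹r)^{1/2}`,
one has `E² − (E⁻)² ≤ 2Δt·‖r‖_*·(E⁻ + E)`. -/
theorem error_scheme_energy_step_bound (n : ℕ) (Δt : ℝ) (hΔt : 0 < Δt)
    (ζ : ℝ) (hζ : ζ ∈ Set.Icc (1 / 2 : ℝ) 1)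
    (M A : Matrix (Fin n) (Fin n) ℝ) (hM : M.PosDef) (hA : A.PosSemidef)
    (em e dem de r : Fin n → ℝ)
    (h1 : (1 / Δt) • (M *ᵥ (de - dem)) + A *ᵥ ((1 - ζ) • em + ζ • e) = r)
    (h2 : (1 / Δt) • (e - em) = (1 - ζ) • dem + ζ • de) :
    (Real.sqrt (de ⬝ᵥ (M *ᵥ de) + e ⬝ᵥ (A *ᵥ e))) ^ 2 -
        (Real.sqrt (dem ⬝ᵥ (M *ᵥ dem) + em ⬝ᵥ (A *ᵥ em))) ^ 2 ≤
      2 * Δt * Real.sqrt (r ⬝ᵥ (M⁻¹ *ᵥ r)) *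
        (Real.sqrt (dem ⬝ᵥ (M *ᵥ dem) + em ⬝ᵥ (A *ᵥ em)) +
          Real.sqrt (de ⬝ᵥ (M *ᵥ de) + e ⬝ᵥ (A *ᵥ e))) := by
  obtain ⟨hζ₁, hζ₂⟩ := hζ
  have hMde := hM.posSemidef.dotProduct_mulVec_self_nonneg de
  have hMdem := hM.posSemidef.dotProduct_mulVec_self_nonneg dem
  have hAe := hA.dotProduct_mulVec_self_nonneg e
  have hAem := hA.dotProduct_mulVec_self_nonneg em
  rw [Real.sq_sqrt (by positivity), Real.sq_sqrt (by positivity)]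
  calc _ ≤ 2 * Δt * (((1 - ζ) • dem + ζ • de) ⬝ᵥ r) :=
        errorScheme_energy_sub_le hΔt.ne' hζ₁ hM.posSemidef hA h1 h2
    _ ≤ 2 * Δt * (√(r ⬝ᵥ M⁻¹ *ᵥ r) *
          √(((1 - ζ) • dem + ζ • de) ⬝ᵥ M *ᵥ ((1 - ζ) • dem + ζ • de))) := by
        gcongr
        exact hM.dotProduct_le_sqrt_inv_mul_sqrt _ _
    _ ≤ 2 * Δt * (√(r ⬝ᵥ M⁻¹ *ᵥ r) *
          ((1 - ζ) * √(dem ⬝ᵥ M *ᵥ dem) + ζ * √(de ⬝ᵥ M *ᵥ de))) := by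
        gcongr
        exact hM.posSemidef.sqrt_dotProduct_mulVec_smul_add_smul_le (by linarith) (by linarith) _ _
    _ ≤ 2 * Δt * (√(r ⬝ᵥ M⁻¹ *ᵥ r) *
          (√(dem ⬝ᵥ M *ᵥ dem + em ⬝ᵥ A *ᵥ em) + √(de ⬝ᵥ M *ᵥ de + e ⬝ᵥ A *ᵥ e))) := by
        gcongr
        · exact mul_le_of_le_one_left (Real.sqrt_nonneg _) (by linarith) |>.trans
            (Real.sqrt_le_sqrt (by linarith))
        · exact mul_le_of_le_one_left (Real.sqrt_nonneg _) hζ₂ |>.trans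
            (Real.sqrt_le_sqrt (by linarith))
    _ = _ := by ring
end

section
/- Let n ∈ ℕ, Δt > 0, ζ ∈ [1/2, 1], let M ∈ ℝ^{n×n} be symmetric positive definite and A ∈ ℝ^{n×n} symmetric positive semidefinite, and let e⁻, e, ė⁻, ė, r ∈ ℝⁿ satisfy the error scheme equations (1/Δt)·M(ė − ė⁻) + A((1−ζ)e⁻ + ζe) = r and (1/Δt)(e − e⁻) = (1−ζ)ė⁻ + ζė. With E⁻ := (ė⁻ᵀMė⁻ + e⁻ᵀAe⁻)^{1/2}, E := (ėᵀMė + eᵀAe)^{1/2} and ‖r‖_* := (rᵀM⁻¹r)^{1/2}, one has E − E⁻ ≤ 2Δt·‖r‖_*. -/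
open Matrix
open scoped MatrixOrder

section aux
variable {n : ℕ}

private lemma symm_eq {Q : Matrix (Fin n) (Fin n) ℝ} (hQ : Q.IsHermitian) : Qᵀ = Q := by
  rw [← Matrix.conjTranspose_eq_transpose_of_trivial]; exact hQ

private lemma dot_sym {Q : Matrix (Fin n) (Fin n) ℝ} (hQ : Q.IsHermitian) (x y : Fin n → ℝ) :
    x ⬝ᵥ (Q *ᵥ y) = y ⬝ᵥ (Q *ᵥ x) := by
  rw [dotProduct_mulVec, ← Matrix.mulVec_transpose, symm_eq hQ, dotProduct_comm]

private lemma dot_cs {Q : Matrix (Fin n) (Fin n) ℝ} (hQ : Q.PosSemidef) (x y : Fin n → ℝ) :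
    x ⬝ᵥ (Q *ᵥ y) ≤ Real.sqrt (x ⬝ᵥ (Q *ᵥ x)) * Real.sqrt (y ⬝ᵥ (Q *ᵥ y)) := by
  have hC : CFC.sqrt Q * CFC.sqrt Q = Q := CFC.sqrt_mul_sqrt_self Q hQ.nonneg
  have hCsym : (CFC.sqrt Q)ᵀ = CFC.sqrt Q := symm_eq (CFC.sqrt_nonneg Q).posSemidef.isHermitian
  have key : ∀ a b : Fin n → ℝ, a ⬝ᵥ (Q *ᵥ b) = (CFC.sqrt Q *ᵥ a) ⬝ᵥ (CFC.sqrt Q *ᵥ b) := by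
    intro a b
    conv_lhs => rw [← hC]
    rw [← Matrix.mulVec_mulVec, dotProduct_mulVec, ← Matrix.mulVec_transpose, hCsym]
  rw [key, key, key]
  set u := CFC.sqrt Q *ᵥ x
  set w := CFC.sqrt Q *ᵥ y
  have h2 : (u ⬝ᵥ w) ^ 2 ≤ (u ⬝ᵥ u) * (w ⬝ᵥ w) := by
    have := Finset.sum_mul_sq_le_sq_mul_sq Finset.univ u w
    simpa [dotProduct, sq] using this
  calc u ⬝ᵥ w ≤ |u ⬝ᵥ w| := le_abs_self _
    _ = Real.sqrt ((u ⬝ᵥ w) ^ 2) := (Real.sqrt_sq_eq_abs _).symm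
    _ ≤ Real.sqrt ((u ⬝ᵥ u) * (w ⬝ᵥ w)) := Real.sqrt_le_sqrt h2
    _ = _ := Real.sqrt_mul (Finset.sum_nonneg fun i _ => mul_self_nonneg (u i)) _

end aux

section aux2
variable {n : ℕ}

/-- Key algebraic identity for a symmetric matrix. -/
private lemma key_id {Q : Matrix (Fin n) (Fin n) ℝ} (hQ : Q.IsHermitian)
    (ζ : ℝ) (a b : Fin n → ℝ) :
    ((1 - ζ) • a + ζ • b) ⬝ᵥ (Q *ᵥ (b - a)) =
      (1/2) * (b ⬝ᵥ (Q *ᵥ b) - a ⬝ᵥ (Q *ᵥ a)) +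
        (ζ - 1/2) * ((b - a) ⬝ᵥ (Q *ᵥ (b - a))) := by
  have hab : a ⬝ᵥ (Q *ᵥ b) = b ⬝ᵥ (Q *ᵥ a) := dot_sym hQ a b
  simp only [Matrix.mulVec_sub, Matrix.mulVec_add, Matrix.mulVec_smul, dotProduct_sub,
    dotProduct_add, add_dotProduct, sub_dotProduct, smul_dotProduct, dotProduct_smul,
    smul_eq_mul]
  linear_combination (1/2) * hab

end aux2

set_option maxHeartbeats 1600000 in
/-- One-step a posteriori increment bound for the error scheme of the ζ-scheme,
for `ζ ∈ [1/2, 1]`, `M` symmetric positive definite, `A` symmetric positive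
semidefinite: with energy norms `E⁻ = (ė⁻ᵀMė⁻ + e⁻ᵀAe⁻)^{1/2}`,
`E = (ėᵀMė + eᵀAe)^{1/2}` and dual residual norm `‖r‖_* = (rᵀM⁻¹r)^{1/2}`,
one has `E − E⁻ ≤ 2Δt·‖r‖_*`. -/
theorem error_scheme_energy_increment_bound (n : ℕ) (Δt : ℝ) (hΔt : 0 < Δt)
    (ζ : ℝ) (hζ : ζ ∈ Set.Icc (1 / 2 : ℝ) 1)
    (M A : Matrix (Fin n) (Fin n) ℝ) (hM : M.PosDef) (hA : A.PosSemidef)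
    (em e dem de r : Fin n → ℝ)
    (h1 : (1 / Δt) • (M *ᵥ (de - dem)) + A *ᵥ ((1 - ζ) • em + ζ • e) = r)
    (h2 : (1 / Δt) • (e - em) = (1 - ζ) • dem + ζ • de) :
    Real.sqrt (de ⬝ᵥ (M *ᵥ de) + e ⬝ᵥ (A *ᵥ e)) -
        Real.sqrt (dem ⬝ᵥ (M *ᵥ dem) + em ⬝ᵥ (A *ᵥ em)) ≤
      2 * Δt * Real.sqrt (r ⬝ᵥ (M⁻¹ *ᵥ r)) := by
  obtain ⟨hζ1, hζ2⟩ := hζ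
  have hMps : M.PosSemidef := hM.posSemidef
  have hMinv : M⁻¹.PosDef := hM.inv
  set v : Fin n → ℝ := (1 - ζ) • dem + ζ • de with hv
  -- nonnegativity facts
  have hMde : 0 ≤ de ⬝ᵥ (M *ᵥ de) := by simpa using hMps.dotProduct_mulVec_nonneg de
  have hMdem : 0 ≤ dem ⬝ᵥ (M *ᵥ dem) := by simpa using hMps.dotProduct_mulVec_nonneg dem
  have hAe : 0 ≤ e ⬝ᵥ (A *ᵥ e) := by simpa using hA.dotProduct_mulVec_nonneg e
  have hAem : 0 ≤ em ⬝ᵥ (A *ᵥ em) := by simpa using hA.dotProduct_mulVec_nonneg em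
  set Sb : ℝ := de ⬝ᵥ (M *ᵥ de) + e ⬝ᵥ (A *ᵥ e) with hSb
  set Sa : ℝ := dem ⬝ᵥ (M *ᵥ dem) + em ⬝ᵥ (A *ᵥ em) with hSa
  set b : ℝ := Real.sqrt Sb
  set a : ℝ := Real.sqrt Sa
  set ρ : ℝ := Real.sqrt (r ⬝ᵥ (M⁻¹ *ᵥ r))
  have ha : 0 ≤ a := Real.sqrt_nonneg _
  have hb : 0 ≤ b := Real.sqrt_nonneg _
  have hρ : 0 ≤ ρ := Real.sqrt_nonneg _
  -- step 1: energy identity / inequality:  (Sb - Sa) / 2 ≤ Δt * (v ⬝ᵥ r)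
  have step1 : (Sb - Sa) / 2 ≤ Δt * (v ⬝ᵥ r) := by
    have hd := congrArg (fun w => v ⬝ᵥ w) h1
    simp only [dotProduct_add, dotProduct_smul, smul_eq_mul] at hd
    -- first term
    have t1 : v ⬝ᵥ (M *ᵥ (de - dem)) =
        (1/2) * (de ⬝ᵥ (M *ᵥ de) - dem ⬝ᵥ (M *ᵥ dem)) +
          (ζ - 1/2) * ((de - dem) ⬝ᵥ (M *ᵥ (de - dem))) := key_id hM.1 ζ dem de
    -- second term
    have t2 : v ⬝ᵥ (A *ᵥ ((1 - ζ) • em + ζ • e)) =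
        (1/Δt) * ((1/2) * (e ⬝ᵥ (A *ᵥ e) - em ⬝ᵥ (A *ᵥ em)) +
          (ζ - 1/2) * ((e - em) ⬝ᵥ (A *ᵥ (e - em)))) := by
      have hvv : v = (1/Δt) • (e - em) := h2.symm
      rw [hvv, smul_dotProduct, smul_eq_mul,
        dot_sym hA.1 (e - em) ((1 - ζ) • em + ζ • e), key_id hA.1 ζ em e]
    have hzm : 0 ≤ (ζ - 1/2) * ((de - dem) ⬝ᵥ (M *ᵥ (de - dem))) :=
      mul_nonneg (by linarith) (by simpa using hMps.dotProduct_mulVec_nonneg (de - dem))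
    have hza : 0 ≤ (ζ - 1/2) * ((e - em) ⬝ᵥ (A *ᵥ (e - em))) :=
      mul_nonneg (by linarith) (by simpa using hA.dotProduct_mulVec_nonneg (e - em))
    rw [t1, t2] at hd
    have hΔt' : Δt ≠ 0 := ne_of_gt hΔt
    have hd' : Δt * (v ⬝ᵥ r) = (Sb - Sa) / 2 +
        ((ζ - 1/2) * ((de - dem) ⬝ᵥ (M *ᵥ (de - dem))) +
          (ζ - 1/2) * ((e - em) ⬝ᵥ (A *ᵥ (e - em)))) := by
      have := congrArg (fun t => Δt * t) hd
      rw [← this]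
      field_simp [hSb, hSa]
      ring
    linarith
  -- step 2: v ⬝ᵥ r ≤ ρ * sqrt (v ⬝ᵥ M v)
  have hinv : M⁻¹ * M = 1 := Matrix.nonsing_inv_mul M hM.det_pos.ne'.isUnit
  have step2 : v ⬝ᵥ r ≤ ρ * Real.sqrt (v ⬝ᵥ (M *ᵥ v)) := by
    have hrv : v ⬝ᵥ r = r ⬝ᵥ (M⁻¹ *ᵥ (M *ᵥ v)) := by
      rw [Matrix.mulVec_mulVec, hinv, Matrix.one_mulVec, dotProduct_comm]
    have hcs := dot_cs hMinv.posSemidef r (M *ᵥ v)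
    have hMv : (M *ᵥ v) ⬝ᵥ (M⁻¹ *ᵥ (M *ᵥ v)) = v ⬝ᵥ (M *ᵥ v) := by
      rw [Matrix.mulVec_mulVec, hinv, Matrix.one_mulVec, dotProduct_comm]
    rw [hrv]
    rw [hMv] at hcs
    exact hcs
  -- step 3: sqrt (v M v) ≤ a + b
  have step3 : Real.sqrt (v ⬝ᵥ (M *ᵥ v)) ≤ a + b := by
    set x : ℝ := dem ⬝ᵥ (M *ᵥ dem)
    set y : ℝ := de ⬝ᵥ (M *ᵥ de)
    have hxy : dem ⬝ᵥ (M *ᵥ de) ≤ Real.sqrt x * Real.sqrt y := dot_cs hMps dem de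
    have hvMv : v ⬝ᵥ (M *ᵥ v) = (1-ζ)^2 * x + 2*(1-ζ)*ζ * (dem ⬝ᵥ (M *ᵥ de)) + ζ^2 * y := by
      have hsym : de ⬝ᵥ (M *ᵥ dem) = dem ⬝ᵥ (M *ᵥ de) := dot_sym hM.1 de dem
      simp only [hv, Matrix.mulVec_add, Matrix.mulVec_smul, dotProduct_add, add_dotProduct,
        smul_dotProduct, dotProduct_smul, smul_eq_mul]
      linear_combination (2*(1-ζ)*ζ - ζ*(1-ζ)) * hsym
    have hbound : v ⬝ᵥ (M *ᵥ v) ≤ ((1-ζ) * Real.sqrt x + ζ * Real.sqrt y)^2 := by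
      have hx : Real.sqrt x * Real.sqrt x = x := Real.mul_self_sqrt hMdem
      have hy : Real.sqrt y * Real.sqrt y = y := Real.mul_self_sqrt hMde
      have hc : 0 ≤ 2*(1-ζ)*ζ := by nlinarith
      nlinarith [mul_le_mul_of_nonneg_left hxy hc]
    have h1' : Real.sqrt (v ⬝ᵥ (M *ᵥ v)) ≤ (1-ζ) * Real.sqrt x + ζ * Real.sqrt y := by
      have hnn : 0 ≤ (1-ζ) * Real.sqrt x + ζ * Real.sqrt y := by
        have := Real.sqrt_nonneg x; have := Real.sqrt_nonneg y; nlinarith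
      calc Real.sqrt (v ⬝ᵥ (M *ᵥ v)) ≤ Real.sqrt (((1-ζ) * Real.sqrt x + ζ * Real.sqrt y)^2) :=
            Real.sqrt_le_sqrt hbound
        _ = _ := Real.sqrt_sq hnn
    have hxa : Real.sqrt x ≤ a := Real.sqrt_le_sqrt (by simp [hSa]; linarith)
    have hyb : Real.sqrt y ≤ b := Real.sqrt_le_sqrt (by simp [hSb]; linarith)
    have hζ0 : (0:ℝ) ≤ ζ := by linarith
    have p1 : (1-ζ) * Real.sqrt x ≤ (1-ζ) * a :=
      mul_le_mul_of_nonneg_left hxa (by linarith)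
    have p2 : ζ * Real.sqrt y ≤ ζ * b := mul_le_mul_of_nonneg_left hyb hζ0
    have q1 : 0 ≤ ζ * a := mul_nonneg hζ0 ha
    have q2 : 0 ≤ (1-ζ) * b := mul_nonneg (by linarith) hb
    linarith
  -- combine
  have hvMvnn : 0 ≤ Real.sqrt (v ⬝ᵥ (M *ᵥ v)) := Real.sqrt_nonneg _
  have hcomb : (Sb - Sa) / 2 ≤ Δt * (ρ * (a + b)) := by
    have h4 : v ⬝ᵥ r ≤ ρ * (a + b) :=
      le_trans step2 (mul_le_mul_of_nonneg_left step3 hρ)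
    exact le_trans step1 (mul_le_mul_of_nonneg_left h4 hΔt.le)
  have hb2 : b^2 = Sb := Real.sq_sqrt (by positivity)
  have ha2 : a^2 = Sa := Real.sq_sqrt (by positivity)
  have hmain : (b - a) * (a + b) ≤ (2 * Δt * ρ) * (a + b) := by
    have : b^2 - a^2 ≤ 2 * Δt * ρ * (a + b) := by rw [hb2, ha2]; linarith
    nlinarith [this]
  rcases eq_or_lt_of_le (add_nonneg ha hb) with hab | hab
  · have ha0 : a = 0 := by linarith
    have hb0 : b = 0 := by linarith
    show b - a ≤ 2 * Δt * ρ
    rw [hb0, ha0]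
    have : 0 ≤ 2 * Δt * ρ := by positivity
    linarith
  · exact le_of_mul_le_mul_right hmain hab
end

section
/- Let n ∈ ℕ, Δt > 0, ζ ∈ [1/2, 1], let M ∈ ℝ^{n×n} be symmetric positive definite and A ∈ ℝ^{n×n} symmetric positive semidefinite, and let e⁻, e, ė⁻, ė ∈ ℝⁿ satisfy the homogeneous error scheme equations (1/Δt)·M(ė − ė⁻) + A((1−ζ)e⁻ + ζe) = 0 and (1/Δt)(e − e⁻) = (1−ζ)ė⁻ + ζė. Then the discrete energy is nonincreasing: ėᵀMė + eᵀAe ≤ (ė⁻)ᵀMė⁻ + (e⁻)ᵀAe⁻. -/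
/-!
Pair the first equation with `e - e⁻`; by the second equation this turns the mass term into
`w ⬝ M (ė - ė⁻)` with `w = (1-ζ)ė⁻ + ζė`, and by symmetry of `A` the stiffness term into
`c ⬝ A (e - e⁻)` with `c = (1-ζ)e⁻ + ζe`. For a symmetric matrix, pairing a `ζ`-average with the
increment it averages over gives half the increment of the quadratic form plus
`(ζ - 1/2)` times the quadratic form of the increment; the latter is nonnegative for
`ζ ≥ 1/2`, so the energy cannot increase.
-/

open Matrix

namespace Matrix

variable {ι R : Type*} [Fintype ι]

theorem IsSymm.dotProduct_mulVec_comm [CommSemiring R] {M : Matrix ι ι R} (hM : M.IsSymm)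
    (x y : ι → R) : x ⬝ᵥ (M *ᵥ y) = y ⬝ᵥ (M *ᵥ x) := by
  rw [dotProduct_mulVec, ← mulVec_transpose, hM.eq, dotProduct_comm]

theorem IsSymm.two_mul_dotProduct_mulVec_average_sub [CommRing R] {M : Matrix ι ι R}
    (hM : M.IsSymm) (ζ : R) (a b : ι → R) :
    2 * (((1 - ζ) • a + ζ • b) ⬝ᵥ (M *ᵥ (b - a))) =
      b ⬝ᵥ (M *ᵥ b) - a ⬝ᵥ (M *ᵥ a) + (2 * ζ - 1) * ((b - a) ⬝ᵥ (M *ᵥ (b - a))) := by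
  simp only [mulVec_sub, dotProduct_sub, sub_dotProduct, add_dotProduct, smul_dotProduct,
    smul_eq_mul]
  linear_combination hM.dotProduct_mulVec_comm a b

theorem PosSemidef.dotProduct_mulVec_sub_le_two_mul_average {M : Matrix ι ι ℝ}
    (hM : M.PosSemidef) {ζ : ℝ} (hζ : 1 / 2 ≤ ζ) (a b : ι → ℝ) :
    b ⬝ᵥ (M *ᵥ b) - a ⬝ᵥ (M *ᵥ a) ≤ 2 * (((1 - ζ) • a + ζ • b) ⬝ᵥ (M *ᵥ (b - a))) := by
  have hsymm : M.IsSymm := isHermitian_iff_isSymm.mp hM.isHermitian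
  have hinc : 0 ≤ (b - a) ⬝ᵥ (M *ᵥ (b - a)) := by
    simpa only [star_trivial] using hM.dotProduct_mulVec_nonneg (b - a)
  rw [hsymm.two_mul_dotProduct_mulVec_average_sub]
  nlinarith

end Matrix

theorem error_scheme_energy_stability_general (n : ℕ) (Δt : ℝ)
    (ζ : ℝ) (hζ : ζ ∈ Set.Icc (1 / 2 : ℝ) 1)
    (M A : Matrix (Fin n) (Fin n) ℝ) (hM : M.PosDef) (hA : A.PosSemidef)
    (em e dem de : Fin n → ℝ)
    (h1 : (1 / Δt) • (M *ᵥ (de - dem)) + A *ᵥ ((1 - ζ) • em + ζ • e) = 0)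
    (h2 : (1 / Δt) • (e - em) = (1 - ζ) • dem + ζ • de) :
    de ⬝ᵥ (M *ᵥ de) + e ⬝ᵥ (A *ᵥ e) ≤ dem ⬝ᵥ (M *ᵥ dem) + em ⬝ᵥ (A *ᵥ em) := by
  have hAsymm : A.IsSymm := isHermitian_iff_isSymm.mp hA.isHermitian
  have balance : ((1 - ζ) • dem + ζ • de) ⬝ᵥ (M *ᵥ (de - dem)) +
      ((1 - ζ) • em + ζ • e) ⬝ᵥ (A *ᵥ (e - em)) = 0 := by
    have h := congrArg ((e - em) ⬝ᵥ ·) h1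
    simp only [dotProduct_add, dotProduct_smul, ← smul_dotProduct, h2, dotProduct_zero] at h
    rwa [hAsymm.dotProduct_mulVec_comm] at h
  have hMinc := hM.posSemidef.dotProduct_mulVec_sub_le_two_mul_average hζ.1 dem de
  have hAinc := hA.dotProduct_mulVec_sub_le_two_mul_average hζ.1 em e
  linarith

/-- Unconditional energy stability of the generalized trapezoidal (ζ-) scheme for
`ζ ∈ [1/2, 1]`: for one homogeneous step (zero residual) with `M` symmetric
positive definite and `A` symmetric positive semidefinite, the discrete energy
is nonincreasing: `ėᵀMė + eᵀAe ≤ (ė⁻)ᵀMė⁻ + (e⁻)ᵀAe⁻`. -/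
theorem error_scheme_energy_stability (n : ℕ) (Δt : ℝ) (hΔt : 0 < Δt)
    (ζ : ℝ) (hζ : ζ ∈ Set.Icc (1 / 2 : ℝ) 1)
    (M A : Matrix (Fin n) (Fin n) ℝ) (hM : M.PosDef) (hA : A.PosSemidef)
    (em e dem de : Fin n → ℝ)
    (h1 : (1 / Δt) • (M *ᵥ (de - dem)) + A *ᵥ ((1 - ζ) • em + ζ • e) = 0)
    (h2 : (1 / Δt) • (e - em) = (1 - ζ) • dem + ζ • de) :
    de ⬝ᵥ (M *ᵥ de) + e ⬝ᵥ (A *ᵥ e) ≤ dem ⬝ᵥ (M *ᵥ dem) + em ⬝ᵥ (A *ᵥ em) :=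
  error_scheme_energy_stability_general n Δt ζ hζ M A hM hA em e dem de h1 h2
end

section
/- Let n, m, K ∈ ℕ with K ≥ 1 and Δt > 0. Let ‖·‖_V be the norm on ℝⁿ induced by an inner product ⟨·,·⟩_V, let ℝᵐ carry an inner product with norm ‖·‖_C, and let 𝒞 : ℝⁿ → ℝᵐ be linear with ‖𝒞v‖_C ≤ γ‖v‖_V for all v ∈ ℝⁿ (γ ≥ 0). Let A ∈ ℝ^{n×n} be symmetric with vᵀAv ≥ a‖v‖_V² for all v ∈ ℝⁿ, where a > 0. Let u_h, u_r : {1,…,K} → ℝⁿ, y : {1,…,K} → ℝᵐ, set e^k := u_h^k − u_r^k, J_h := (Δt/2)·Σ_{k=1}^{K} ‖𝒞u_h^k − y^k‖_C², J_r := (Δt/2)·Σ_{k=1}^{K} ‖𝒞u_r^k − y^k‖_C², and Δ̃ := (Δt·Σ_{k=1}^{K} (e^k)ᵀAe^k)^{1/2}. Then |J_h − J_r| ≤ (γ²/(2a))·Δ̃² + γ·(2J_r/a)^{1/2}·Δ̃. -/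
open Matrix Finset

/-!
Write `J(u) = B(𝒞u − y, 𝒞u − y)` for the symmetric positive semidefinite form
`B(x, z) = (Δt/2) Σ_k (x^k)ᵀ G z^k` on trajectories. Since `𝒞u_h − y = (𝒞u_r − y) + 𝒞e`,
`J_h − J_r = B(𝒞e, 𝒞e) + 2 B(𝒞e, 𝒞u_r − y)`, and Cauchy–Schwarz for `B` bounds this by
`B(𝒞e, 𝒞e) + 2 √B(𝒞e, 𝒞e) √J_r`. Finally `‖𝒞e^k‖_C² ≤ γ² ‖e^k‖_V² ≤ (γ²/a) (e^k)ᵀAe^k`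
gives `B(𝒞e, 𝒞e) ≤ (γ²/(2a)) Δ̃²`.
-/

namespace LinearMap.BilinForm

variable {M : Type*} [AddCommGroup M] [Module ℝ M] {B : LinearMap.BilinForm ℝ M}

theorem abs_apply_add_sub_apply_le (hs : ∀ x, 0 ≤ B x x) (hB : B.IsSymm) (r d : M) :
    |B (r + d) (r + d) - B r r| ≤ B d d + 2 * √(B d d) * √(B r r) := by
  have hexpand : B (r + d) (r + d) - B r r = B d d + 2 * B d r := by
    simp only [map_add, LinearMap.add_apply, hB.eq r d]
    ring
  have hcross : |B d r| ≤ √(B d d) * √(B r r) := by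
    rw [← Real.sqrt_mul (hs d), ← Real.sqrt_sq_eq_abs]
    exact Real.sqrt_le_sqrt (B.apply_sq_le_of_symm hs (isSymm_iff.mp hB) d r)
  calc |B (r + d) (r + d) - B r r| ≤ |B d d| + |2 * B d r| := hexpand ▸ abs_add_le _ _
    _ ≤ B d d + 2 * √(B d d) * √(B r r) := by
      rw [abs_of_nonneg (hs d), abs_mul, abs_two, mul_assoc]
      gcongr

end LinearMap.BilinForm

section Trajectory

variable {ι κ : Type*} [Fintype ι] [Fintype κ] [DecidableEq κ]

def trajectoryBilin (G : Matrix κ κ ℝ) (S : Finset ℕ) (w : ℝ) :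
    LinearMap.BilinForm ℝ (ℕ → κ → ℝ) :=
  w • ∑ k ∈ S, G.toBilin'.compl₁₂ (LinearMap.proj k) (LinearMap.proj k)

@[simp]
theorem trajectoryBilin_apply (G : Matrix κ κ ℝ) (S : Finset ℕ) (w : ℝ) (x z : ℕ → κ → ℝ) :
    trajectoryBilin G S w x z = w * ∑ k ∈ S, x k ⬝ᵥ (G *ᵥ z k) := by
  simp [trajectoryBilin, Matrix.toBilin'_apply', LinearMap.sum_apply]

theorem trajectoryBilin_isSymm {G : Matrix κ κ ℝ} (hG : G.IsSymm) (S : Finset ℕ) (w : ℝ) :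
    (trajectoryBilin G S w).IsSymm := by
  refine ⟨fun x z => ?_⟩
  simp only [trajectoryBilin_apply]
  congr 1
  refine Finset.sum_congr rfl fun k _ => ?_
  simpa only [Matrix.toBilin'_apply'] using
    (Matrix.isSymm_toBilin'_iff_isSymm.mpr hG).eq (x k) (z k)

theorem trajectoryBilin_self_nonneg {G : Matrix κ κ ℝ} (hG : G.PosSemidef) (S : Finset ℕ)
    {w : ℝ} (hw : 0 ≤ w) (x : ℕ → κ → ℝ) : 0 ≤ trajectoryBilin G S w x x := by
  rw [trajectoryBilin_apply]
  exact mul_nonneg hw (Finset.sum_nonneg fun k _ => by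
    simpa using hG.dotProduct_mulVec_nonneg (x k))

theorem trajectoryBilin_mulVec_self_le {C : Matrix κ ι ℝ} {G : Matrix κ κ ℝ}
    {A : Matrix ι ι ℝ} {c : ℝ} (hCA : ∀ v, (C *ᵥ v) ⬝ᵥ (G *ᵥ (C *ᵥ v)) ≤ c * (v ⬝ᵥ (A *ᵥ v)))
    (S : Finset ℕ) {w : ℝ} (hw : 0 ≤ w) (e : ℕ → ι → ℝ) :
    trajectoryBilin G S w (fun k => C *ᵥ e k) (fun k => C *ᵥ e k) ≤
      c * (w * ∑ k ∈ S, e k ⬝ᵥ (A *ᵥ e k)) := by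
  rw [trajectoryBilin_apply, mul_left_comm c, Finset.mul_sum S _ c]
  gcongr with k
  exact hCA (e k)

end Trajectory

theorem le_sq_div_mul_of_sqrt_le_mul_sqrt {x y z γ a : ℝ} (hγ : 0 ≤ γ) (ha : 0 < a)
    (hy : 0 ≤ y) (hxy : √x ≤ γ * √y) (hyz : a * y ≤ z) : x ≤ γ ^ 2 / a * z := by
  have hx : x ≤ γ ^ 2 * y := by
    rwa [← Real.sqrt_sq hγ, ← Real.sqrt_mul (sq_nonneg γ),
      Real.sqrt_le_sqrt_iff (mul_nonneg (sq_nonneg γ) hy)] at hxy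
  calc x ≤ γ ^ 2 * y := hx
    _ ≤ γ ^ 2 * (z / a) := by gcongr; rwa [le_div_iff₀' ha]
    _ = γ ^ 2 / a * z := by ring

theorem add_two_mul_sqrt_mul_sqrt_le {β γ a Δ : ℝ} (hγ : 0 ≤ γ) (ha : 0 < a) (hΔ : 0 ≤ Δ)
    (hβ : β ≤ γ ^ 2 / (2 * a) * Δ ^ 2) (J : ℝ) :
    β + 2 * √β * √J ≤ γ ^ 2 / (2 * a) * Δ ^ 2 + γ * √(2 * J / a) * Δ := by
  have hleft : 2 * √(γ ^ 2 / (2 * a) * Δ ^ 2) * √J =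
      √(2 ^ 2 * (γ ^ 2 / (2 * a) * Δ ^ 2) * J) := by
    rw [Real.sqrt_mul (x := 2 ^ 2 * _) (by positivity),
      Real.sqrt_mul (x := 2 ^ 2) (by positivity), Real.sqrt_sq zero_le_two]
  have hright : γ * √(2 * J / a) * Δ = √(γ ^ 2 * Δ ^ 2 * (2 * J / a)) := by
    rw [Real.sqrt_mul (x := γ ^ 2 * _) (by positivity),
      Real.sqrt_mul (x := γ ^ 2) (sq_nonneg γ), Real.sqrt_sq hγ, Real.sqrt_sq hΔ]
    ring
  calc β + 2 * √β * √J
      ≤ γ ^ 2 / (2 * a) * Δ ^ 2 + 2 * √(γ ^ 2 / (2 * a) * Δ ^ 2) * √J := by gcongr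
    _ = γ ^ 2 / (2 * a) * Δ ^ 2 + γ * √(2 * J / a) * Δ := by
      rw [hleft, hright]
      congr 2
      field_simp

theorem objective_apost_error_estimate_general (n m K : ℕ)
    (Δt : ℝ) (hΔt : 0 < Δt)
    (V : Matrix (Fin n) (Fin n) ℝ) (hV : V.PosDef)
    (G : Matrix (Fin m) (Fin m) ℝ) (hG : G.PosDef)
    (C : Matrix (Fin m) (Fin n) ℝ) (γ : ℝ) (hγ : 0 ≤ γ)
    (hC : ∀ v : Fin n → ℝ,
      Real.sqrt ((C *ᵥ v) ⬝ᵥ (G *ᵥ (C *ᵥ v))) ≤ γ * Real.sqrt (v ⬝ᵥ (V *ᵥ v)))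
    (A : Matrix (Fin n) (Fin n) ℝ) (a : ℝ) (ha : 0 < a)
    (hcoer : ∀ v : Fin n → ℝ, a * (v ⬝ᵥ (V *ᵥ v)) ≤ v ⬝ᵥ (A *ᵥ v))
    (uh ur : ℕ → Fin n → ℝ) (y : ℕ → Fin m → ℝ) :
    |(Δt / 2) * ∑ k ∈ Finset.Icc 1 K,
        ((C *ᵥ uh k - y k) ⬝ᵥ (G *ᵥ (C *ᵥ uh k - y k))) -
      (Δt / 2) * ∑ k ∈ Finset.Icc 1 K,
        ((C *ᵥ ur k - y k) ⬝ᵥ (G *ᵥ (C *ᵥ ur k - y k)))| ≤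
    γ ^ 2 / (2 * a) *
        (Real.sqrt (Δt * ∑ k ∈ Finset.Icc 1 K,
          ((uh k - ur k) ⬝ᵥ (A *ᵥ (uh k - ur k))))) ^ 2 +
      γ * Real.sqrt (2 * ((Δt / 2) * ∑ k ∈ Finset.Icc 1 K,
          ((C *ᵥ ur k - y k) ⬝ᵥ (G *ᵥ (C *ᵥ ur k - y k)))) / a) *
        Real.sqrt (Δt * ∑ k ∈ Finset.Icc 1 K,
          ((uh k - ur k) ⬝ᵥ (A *ᵥ (uh k - ur k)))) := by
  set S := Finset.Icc 1 K
  have hVnonneg (v : Fin n → ℝ) : 0 ≤ v ⬝ᵥ (V *ᵥ v) := by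
    simpa using hV.posSemidef.dotProduct_mulVec_nonneg v
  have hAnonneg (v : Fin n → ℝ) : 0 ≤ v ⬝ᵥ (A *ᵥ v) :=
    (mul_nonneg ha.le (hVnonneg v)).trans (hcoer v)
  have herror : trajectoryBilin G S (Δt / 2) (fun k => C *ᵥ (uh k - ur k))
      (fun k => C *ᵥ (uh k - ur k)) ≤
      γ ^ 2 / (2 * a) * √(Δt * ∑ k ∈ S, (uh k - ur k) ⬝ᵥ (A *ᵥ (uh k - ur k))) ^ 2 := by
    rw [Real.sq_sqrt (mul_nonneg hΔt.le (Finset.sum_nonneg fun k _ => hAnonneg _))]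
    calc _ ≤ γ ^ 2 / a * (Δt / 2 * ∑ k ∈ S, (uh k - ur k) ⬝ᵥ (A *ᵥ (uh k - ur k))) :=
          trajectoryBilin_mulVec_self_le (fun v => le_sq_div_mul_of_sqrt_le_mul_sqrt hγ ha
            (hVnonneg v) (hC v) (hcoer v)) S (by positivity) _
      _ = _ := by ring
  have hresidual : (fun k => C *ᵥ uh k - y k) =
      (fun k => C *ᵥ ur k - y k) + fun k => C *ᵥ (uh k - ur k) := by
    ext k : 1
    simp only [Pi.add_apply, mulVec_sub]
    abel
  have hperturb := LinearMap.BilinForm.abs_apply_add_sub_apply_le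
    (trajectoryBilin_self_nonneg hG.posSemidef S (by positivity : 0 ≤ Δt / 2))
    (trajectoryBilin_isSymm (isHermitian_iff_isSymm.mp hG.isHermitian) S _)
    (fun k => C *ᵥ ur k - y k) (fun k => C *ᵥ (uh k - ur k))
  rw [← hresidual] at hperturb
  simp only [trajectoryBilin_apply] at hperturb herror
  exact hperturb.trans (add_two_mul_sqrt_mul_sqrt_le hγ ha (Real.sqrt_nonneg _) herror _)

/-- A posteriori error estimate for the reduced objective. The state space `ℝⁿ`
carries the inner-product norm `‖v‖_V = (vᵀVv)^{1/2}` induced by a symmetric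
positive definite Gram matrix `V`, the observation space `ℝᵐ` the norm
`‖w‖_C = (wᵀGw)^{1/2}` induced by a symmetric positive definite Gram matrix `G`.
The linear observation operator `𝒞 : v ↦ C *ᵥ v` satisfies `‖𝒞v‖_C ≤ γ‖v‖_V`,
and the symmetric stiffness matrix `A` is coercive: `vᵀAv ≥ a‖v‖_V²` with
`a > 0`. With `e^k = u_h^k − u_r^k`,
`J_h = (Δt/2)·Σ ‖𝒞u_h^k − y^k‖_C²`, `J_r = (Δt/2)·Σ ‖𝒞u_r^k − y^k‖_C²` and
`Δ̃ = (Δt·Σ (e^k)ᵀAe^k)^{1/2}`, one has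
`|J_h − J_r| ≤ (γ²/(2a))·Δ̃² + γ·(2J_r/a)^{1/2}·Δ̃`. -/
theorem objective_apost_error_estimate (n m K : ℕ) (hK : 1 ≤ K)
    (Δt : ℝ) (hΔt : 0 < Δt)
    (V : Matrix (Fin n) (Fin n) ℝ) (hV : V.PosDef)
    (G : Matrix (Fin m) (Fin m) ℝ) (hG : G.PosDef)
    (C : Matrix (Fin m) (Fin n) ℝ) (γ : ℝ) (hγ : 0 ≤ γ)
    (hC : ∀ v : Fin n → ℝ,
      Real.sqrt ((C *ᵥ v) ⬝ᵥ (G *ᵥ (C *ᵥ v))) ≤ γ * Real.sqrt (v ⬝ᵥ (V *ᵥ v)))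
    (A : Matrix (Fin n) (Fin n) ℝ) (hA : A.IsSymm) (a : ℝ) (ha : 0 < a)
    (hcoer : ∀ v : Fin n → ℝ, a * (v ⬝ᵥ (V *ᵥ v)) ≤ v ⬝ᵥ (A *ᵥ v))
    (uh ur : ℕ → Fin n → ℝ) (y : ℕ → Fin m → ℝ) :
    |(Δt / 2) * ∑ k ∈ Finset.Icc 1 K,
        ((C *ᵥ uh k - y k) ⬝ᵥ (G *ᵥ (C *ᵥ uh k - y k))) -
      (Δt / 2) * ∑ k ∈ Finset.Icc 1 K,
        ((C *ᵥ ur k - y k) ⬝ᵥ (G *ᵥ (C *ᵥ ur k - y k)))| ≤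
    γ ^ 2 / (2 * a) *
        (Real.sqrt (Δt * ∑ k ∈ Finset.Icc 1 K,
          ((uh k - ur k) ⬝ᵥ (A *ᵥ (uh k - ur k))))) ^ 2 +
      γ * Real.sqrt (2 * ((Δt / 2) * ∑ k ∈ Finset.Icc 1 K,
          ((C *ᵥ ur k - y k) ⬝ᵥ (G *ᵥ (C *ᵥ ur k - y k)))) / a) *
        Real.sqrt (Δt * ∑ k ∈ Finset.Icc 1 K,
          ((uh k - ur k) ⬝ᵥ (A *ᵥ (uh k - ur k)))) :=
  objective_apost_error_estimate_general n m K Δt hΔt V hV G hG C γ hγ hC A a ha hcoer uh ur y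
end
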